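/- Let N ≥ 1, let u : ℝ^N → [0,∞) be measurable, and let H ⊂ ℝ^N be a closed halfspace. Then for every λ ∈ ℝ, the superlevel sets {x : u^H(x) > λ} and {x : u(x) > λ} have the same Lebesgue measure. Consequently, for every 1 ≤ p < ∞, if u ∈ L^p(ℝ^N) then u^H ∈ L^p(ℝ^N) and ∫_{ℝ^N} |u^H|^p = ∫_{ℝ^N} |u|^p. -/

import Mathlib

open MeasureTheory Filter

/-- Reflection across the boundary hyperplane `{x : ⟪a,x⟫ = b}` of the closed
halfspace `H = {x : ⟪a,x⟫ ≤ b}` (for `‖a‖ = 1`). -/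
noncomputable def reflectH {N : ℕ} (a : EuclideanSpace ℝ (Fin N)) (b : ℝ)
    (x : EuclideanSpace ℝ (Fin N)) : EuclideanSpace ℝ (Fin N) :=
  x - (2 * ((inner ℝ a x : ℝ) - b)) • a

/-- Polarization (two-point rearrangement) of `u` with respect to the closed halfspace
`H = {x : ⟪a,x⟫ ≤ b}` (for `‖a‖ = 1`). -/
noncomputable def polarization {N : ℕ} (a : EuclideanSpace ℝ (Fin N)) (b : ℝ)
    (u : EuclideanSpace ℝ (Fin N) → ℝ) (x : EuclideanSpace ℝ (Fin N)) : ℝ :=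
  if (inner ℝ a x : ℝ) ≤ b then max (u x) (u (reflectH a b x))
  else min (u x) (u (reflectH a b x))

/-!
On each pair `{x, σ_H x}` the polarization `u^H` only swaps the two values of `u` (or keeps
them), and `σ_H` preserves Lebesgue measure. Hence `F ∘ u^H + F ∘ u^H ∘ σ_H = F ∘ u + F ∘ u ∘ σ_H`
pointwise, and integrating gives `∫⁻ F ∘ u^H = ∫⁻ F ∘ u` for every measurable `F ≥ 0`:
`u^H` and `u` have the same distribution. Level sets and `L^p` norms are functionals of the
distribution.
-/

namespace ProbabilityTheory

theorem identDistrib_of_forall_swap {α β : Type*} [MeasurableSpace α] [MeasurableSpace β]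
    {μ : Measure α} {σ : α → α} (hσ : MeasurePreserving σ μ μ) {u v : α → β}
    (hu : Measurable u) (hv : Measurable v)
    (hswap : ∀ x, (v x = u x ∧ v (σ x) = u (σ x)) ∨ (v x = u (σ x) ∧ v (σ x) = u x)) :
    IdentDistrib v u μ μ := by
  refine ⟨hv.aemeasurable, hu.aemeasurable, Measure.ext_of_lintegral _ fun F hF => ?_⟩
  rw [lintegral_map hF hv, lintegral_map hF hu]
  have hpair : ∀ x, F (v x) + F (v (σ x)) = F (u x) + F (u (σ x)) := fun x => by
    rcases hswap x with ⟨h₁, h₂⟩ | ⟨h₁, h₂⟩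
    · rw [h₁, h₂]
    · rw [h₁, h₂, add_comm]
  have hdouble : ∀ w : α → β, Measurable w →
      ∫⁻ x, (F (w x) + F (w (σ x))) ∂μ = 2 * ∫⁻ x, F (w x) ∂μ := fun w hw => by
    have hFw : Measurable fun x => F (w x) := hF.comp hw
    rw [lintegral_add_left hFw, hσ.lintegral_comp (f := fun x => F (w x)) hFw, two_mul]
  have h := lintegral_congr (μ := μ) hpair
  rw [hdouble v hv, hdouble u hu] at h
  exact (ENNReal.mul_right_inj two_ne_zero ENNReal.ofNat_ne_top).mp h

end ProbabilityTheory

section Polarization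

variable {N : ℕ} (a : EuclideanSpace ℝ (Fin N)) (b : ℝ)

lemma inner_reflectH (ha : ‖a‖ = 1) (x : EuclideanSpace ℝ (Fin N)) :
    inner ℝ a (reflectH a b x) = 2 * b - inner ℝ a x := by
  have h : inner ℝ a a = (1 : ℝ) := by
    rw [real_inner_self_eq_norm_sq, ha, one_pow]
  rw [reflectH, inner_sub_right, real_inner_smul_right, h]
  ring

lemma reflectH_reflectH (ha : ‖a‖ = 1) (x : EuclideanSpace ℝ (Fin N)) :
    reflectH a b (reflectH a b x) = x := by
  have h := inner_reflectH a b ha x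
  simp only [reflectH] at h ⊢
  rw [h]
  module

lemma reflectH_eq_reflection_add (ha : ‖a‖ = 1) (x : EuclideanSpace ℝ (Fin N)) :
    reflectH a b x = (ℝ ∙ a)ᗮ.reflection x + (2 * b) • a := by
  rw [Submodule.reflection_orthogonal_apply, Submodule.reflection_singleton_apply, ha]
  simp only [reflectH, neg_sub, two_smul]
  module

lemma measurePreserving_reflectH (ha : ‖a‖ = 1) :
    MeasurePreserving (reflectH a b) volume volume := by
  rw [show reflectH a b = (· + (2 * b) • a) ∘ (ℝ ∙ a)ᗮ.reflection from
    funext (reflectH_eq_reflection_add a b ha)]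
  exact (measurePreserving_add_right volume _).comp (ℝ ∙ a)ᗮ.reflection.measurePreserving

lemma measurable_polarization {u : EuclideanSpace ℝ (Fin N) → ℝ} (hu : Measurable u) :
    Measurable (polarization a b u) := by
  have hσ : Measurable (reflectH a b) := by unfold reflectH; fun_prop
  have hH : MeasurableSet {x : EuclideanSpace ℝ (Fin N) | inner ℝ a x ≤ b} :=
    measurableSet_le (by fun_prop) measurable_const
  exact Measurable.ite hH (hu.max (hu.comp hσ)) (hu.min (hu.comp hσ))

lemma polarization_swap (ha : ‖a‖ = 1) (u : EuclideanSpace ℝ (Fin N) → ℝ)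
    (x : EuclideanSpace ℝ (Fin N)) :
    (polarization a b u x = u x ∧
        polarization a b u (reflectH a b x) = u (reflectH a b x)) ∨
      (polarization a b u x = u (reflectH a b x) ∧
        polarization a b u (reflectH a b x) = u x) := by
  simp only [polarization, reflectH_reflectH a b ha, inner_reflectH a b ha]
  rcases lt_trichotomy (inner ℝ a x) b with hx | hx | hx
  · rw [if_pos hx.le, if_neg (by linarith)]
    rcases le_total (u x) (u (reflectH a b x)) with h | h
    · simp [h]
    · simp [h]
  · have hfix : reflectH a b x = x := by simp [reflectH, hx]
    simp [hfix]
  · rw [if_neg (by linarith), if_pos (by linarith)]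
    rcases le_total (u x) (u (reflectH a b x)) with h | h
    · simp [h]
    · simp [h]

theorem identDistrib_polarization (ha : ‖a‖ = 1) {u : EuclideanSpace ℝ (Fin N) → ℝ}
    (hu : Measurable u) : ProbabilityTheory.IdentDistrib (polarization a b u) u volume volume :=
  ProbabilityTheory.identDistrib_of_forall_swap (measurePreserving_reflectH a b ha) hu
    (measurable_polarization a b hu) (polarization_swap a b ha u)

end Polarization

theorem statement12_general {N : ℕ}
    (u : EuclideanSpace ℝ (Fin N) → ℝ) (hm : Measurable u)
    (a : EuclideanSpace ℝ (Fin N)) (b : ℝ) (ha : ‖a‖ = 1) :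
    (∀ l : ℝ, volume {x | l < polarization a b u x} = volume {x | l < u x}) ∧
      ∀ p : ℝ, 1 ≤ p → MemLp u (ENNReal.ofReal p) volume →
        MemLp (polarization a b u) (ENNReal.ofReal p) volume ∧
          ∫ x, |polarization a b u x| ^ p = ∫ x, |u x| ^ p := by
  have h := identDistrib_polarization a b ha hm
  refine ⟨fun l => h.measure_mem_eq measurableSet_Ioi, fun p _ hLp => ⟨h.symm.memLp_snd hLp, ?_⟩⟩
  exact (h.comp (measurable_abs.pow_const p)).integral_eq

/-- For a measurable nonnegative `u : ℝ^N → [0,∞)` and a closed halfspace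
`H = {x : ⟪a,x⟫ ≤ b}`, the superlevel sets of `u^H` and `u` have the same Lebesgue measure
for every level `l`; consequently, for every `1 ≤ p < ∞`, if `u ∈ L^p` then `u^H ∈ L^p` with
`∫ |u^H|^p = ∫ |u|^p`. -/
theorem statement12 {N : ℕ} (hN : 1 ≤ N)
    (u : EuclideanSpace ℝ (Fin N) → ℝ) (hm : Measurable u) (hu0 : ∀ x, 0 ≤ u x)
    (a : EuclideanSpace ℝ (Fin N)) (b : ℝ) (ha : ‖a‖ = 1) :
    (∀ l : ℝ, volume {x | l < polarization a b u x} = volume {x | l < u x}) ∧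
      ∀ p : ℝ, 1 ≤ p → MemLp u (ENNReal.ofReal p) volume →
        MemLp (polarization a b u) (ENNReal.ofReal p) volume ∧
          ∫ x, |polarization a b u x| ^ p = ∫ x, |u x| ^ p :=
  statement12_general u hm a b ha
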